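/- Let $(\mathcal{A},[~,~],\omega)$ be a symplectic mock-Lie algebra and $r\in\mathcal{A}\otimes\mathcal{A}$ such that: $(\mathcal{A},[~,~],r,\Delta_r)$ is a quasitriangular mock-Lie bialgebra with $\Delta_r(x)=[x,r^1]\otimes r^2 - r^1\otimes[x,r^2]$, and $(\mathcal{A},\Delta_r,\omega,[~,~]_\omega)$ is a dual quasitriangular mock-Lie bialgebra with $[x,y]_\omega = x_{(1)}\omega(x_{(2)},y)-y_{(1)}\omega(x,y_{(2)})$ (Sweedler notation for $\Delta_r$). Then the map $N(x) = \omega(x,r^1)r^2$ is a Nijenhuis operator on $(\mathcal{A},[~,~])$, i.e. $[N(x),N(y)] + N^2([x,y]) = N([N(x),y]) + N([x,N(y)])$ for all $x,y$. -/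

import Mathlib

open TensorProduct LinearMap Module

/-- `Δ_r(x) = [x,r¹]⊗r² - r¹⊗[x,r²]` for `r = ∑ i, r1 i ⊗ r2 i`. -/
noncomputable def DeltaR {K A ι : Type*} [Field K] [AddCommGroup A] [Module K A]
    [Fintype ι] (b : A →ₗ[K] A →ₗ[K] A) (r1 r2 : ι → A) (x : A) : A ⊗[K] A :=
  ∑ i, (b x (r1 i)) ⊗ₜ[K] r2 i - ∑ i, r1 i ⊗ₜ[K] (b x (r2 i))

/-- `f(w₁)·g(w₂)` for `w = w₁ ⊗ w₂ ∈ A ⊗ A`. -/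
noncomputable def pair2 {K A : Type*} [Field K] [AddCommGroup A] [Module K A]
    (f g : Dual K A) (w : A ⊗[K] A) : K :=
  (TensorProduct.lid K K) ((TensorProduct.map f g) w)

/-- The map `N(x) = ω(x, r¹) r²`. -/
noncomputable def Nw {K A ι : Type*} [Field K] [AddCommGroup A] [Module K A]
    [Fintype ι] (ω : A →ₗ[K] A →ₗ[K] K) (r1 r2 : ι → A) (x : A) : A :=
  ∑ i, (ω x (r1 i)) • r2 i

/-!
Contracting the classical Yang–Baxter equation for `r` with `ω(x, ·) ⊗ ω(y, ·) ⊗ id` writes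
`[N x, N y]` as `∑ⱼ ψ(r¹ⱼ) r²ⱼ` for an explicit functional `ψ`, while `N u = ∑ⱼ ω(u, r¹ⱼ) r²ⱼ`.
The co-classical Yang–Baxter equation for `ω`, with the symplectic identity used to rewrite
`ω(N[x,y], z)`, says exactly that `ψ = ω([N x, y] + [x, N y] - N [x, y], ·)`.
-/

section Nijenhuis

variable {K A ι : Type*} [Field K] [AddCommGroup A] [Module K A] [Fintype ι]
  (b : A →ₗ[K] A →ₗ[K] A) (ω : A →ₗ[K] A →ₗ[K] K) (r1 r2 : ι → A)

theorem Nw_add (u v : A) :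
    Nw ω r1 r2 (u + v) = Nw ω r1 r2 u + Nw ω r1 r2 v := by
  simp only [Nw, map_add, LinearMap.add_apply, add_smul, Finset.sum_add_distrib]

theorem Nw_sub (u v : A) :
    Nw ω r1 r2 (u - v) = Nw ω r1 r2 u - Nw ω r1 r2 v := by
  simp only [Nw, map_sub, LinearMap.sub_apply, sub_smul, Finset.sum_sub_distrib]

theorem pair2_DeltaR (f g : Dual K A) (x : A) :
    pair2 f g (DeltaR b r1 r2 x) = ∑ i, (f (b x (r1 i)) * g (r2 i) - f (r1 i) * g (b x (r2 i))) := by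
  simp only [pair2, DeltaR, map_sub, map_sum, TensorProduct.map_tmul, TensorProduct.lid_tmul,
    smul_eq_mul, Finset.sum_sub_distrib]

theorem bracket_Nw_Nw_eq_sum_of_cybe
    (hcybe : ∑ i, ∑ j, (b (r1 i) (r1 j)) ⊗ₜ[K] (r2 i ⊗ₜ[K] r2 j) +
      ∑ i, ∑ j, r1 i ⊗ₜ[K] (r1 j ⊗ₜ[K] (b (r2 i) (r2 j))) -
      ∑ i, ∑ j, r1 i ⊗ₜ[K] ((b (r1 j) (r2 i)) ⊗ₜ[K] r2 j) = 0) (x y : A) :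
    b (Nw ω r1 r2 x) (Nw ω r1 r2 y) = ∑ j, (∑ i, (ω x (r1 i) * ω y (b (r1 j) (r2 i)) -
      ω x (b (r1 i) (r1 j)) * ω y (r2 i))) • r2 j := by
  let contract : A ⊗[K] (A ⊗[K] A) →ₗ[K] A := (TensorProduct.lid K A).toLinearMap ∘ₗ
    TensorProduct.map (ω x) ((TensorProduct.lid K A).toLinearMap ∘ₗ TensorProduct.map (ω y) id)
  have h := congrArg contract hcybe
  simp only [contract, map_sub, map_add, map_sum, map_zero, coe_comp, Function.comp_apply,
    TensorProduct.map_tmul, LinearEquiv.coe_coe, TensorProduct.lid_tmul, id_coe, id_eq,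
    smul_smul] at h
  simp only [Nw, map_sum, map_smul, LinearMap.sum_apply, LinearMap.smul_apply, Finset.smul_sum,
    smul_smul, sub_smul, Finset.sum_smul, Finset.sum_sub_distrib]
  rw [Finset.sum_comm (f := fun i j => (ω y (r1 i) * ω x (r1 j)) • b (r2 j) (r2 i)),
    Finset.sum_comm (f := fun j i => (ω x (r1 i) * ω y (b (r1 j) (r2 i))) • r2 j),
    Finset.sum_comm (f := fun j i => (ω x (b (r1 i) (r1 j)) * ω y (r2 i)) • r2 j)]
  simp only [mul_comm (ω y _) (ω x _)]
  rw [← sub_eq_zero, ← h]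
  abel

theorem Nw_bracket_of_symplectic (hcomm : ∀ x y : A, b x y = b y x) (hskew : ∀ x y : A, ω x y = - ω y x)
    (hsymp : ∀ x y z : A, ω (b x y) z + ω (b y z) x + ω (b z x) y = 0) (x y : A) :
    Nw ω r1 r2 (b x y) = ∑ i, (ω x (b y (r1 i)) - ω (b x (r1 i)) y) • r2 i := by
  refine Finset.sum_congr rfl fun i _ => congrArg (· • r2 i) ?_
  have h := hsymp x y (r1 i)
  rw [hskew (b y (r1 i)) x, hcomm (r1 i) x] at h
  linear_combination h

theorem sum_cybe_coeff_eq_of_ccybe (hcomm : ∀ x y : A, b x y = b y x) (hskew : ∀ x y : A, ω x y = - ω y x)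
    (hsymp : ∀ x y z : A, ω (b x y) z + ω (b y z) x + ω (b z x) y = 0)
    (hccybe : ∀ x y z : A,
      pair2 (ω.flip y) (ω.flip z) (DeltaR b r1 r2 x) +
        pair2 (ω x) (ω y) (DeltaR b r1 r2 z) -
        pair2 (ω x) (ω.flip z) (DeltaR b r1 r2 y) = 0) (x y z : A) :
    ∑ i, (ω x (r1 i) * ω y (b z (r2 i)) - ω x (b (r1 i) z) * ω y (r2 i)) =
      ω (b (Nw ω r1 r2 x) y + b x (Nw ω r1 r2 y) - Nw ω r1 r2 (b x y)) z := by
  have h := hccybe x y z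
  simp only [pair2_DeltaR, LinearMap.flip_apply] at h
  rw [Nw_bracket_of_symplectic b ω r1 r2 hcomm hskew hsymp]
  simp only [Nw, map_add, map_sub, map_sum, map_smul, LinearMap.add_apply, LinearMap.sub_apply,
    LinearMap.sum_apply, LinearMap.smul_apply, smul_eq_mul, sub_mul,
    Finset.sum_sub_distrib] at h ⊢
  simp only [hskew (r1 _) y, hcomm z (r1 _), hcomm y (r2 _), neg_mul, Finset.sum_neg_distrib] at h
  linear_combination -h

end Nijenhuis

theorem stmt9_general {K A ι : Type*} [Field K]
    [AddCommGroup A] [Module K A] [Fintype ι]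
    (b : A →ₗ[K] A →ₗ[K] A) (ω : A →ₗ[K] A →ₗ[K] K) (r1 r2 : ι → A)
    (hcomm : ∀ x y : A, b x y = b y x)
    (hskew : ∀ x y : A, ω x y = - ω y x)
    (hsymp : ∀ x y z : A, ω (b x y) z + ω (b y z) x + ω (b z x) y = 0)
    (hcybe : ∑ i, ∑ j, (b (r1 i) (r1 j)) ⊗ₜ[K] (r2 i ⊗ₜ[K] r2 j) +
      ∑ i, ∑ j, r1 i ⊗ₜ[K] (r1 j ⊗ₜ[K] (b (r2 i) (r2 j))) -
      ∑ i, ∑ j, r1 i ⊗ₜ[K] ((b (r1 j) (r2 i)) ⊗ₜ[K] r2 j) = 0)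
    (hccybe : ∀ x y z : A,
      pair2 (ω.flip y) (ω.flip z) (DeltaR b r1 r2 x) +
        pair2 (ω x) (ω y) (DeltaR b r1 r2 z) -
        pair2 (ω x) (ω.flip z) (DeltaR b r1 r2 y) = 0) :
    ∀ x y : A,
      b (Nw ω r1 r2 x) (Nw ω r1 r2 y) + Nw ω r1 r2 (Nw ω r1 r2 (b x y)) =
        Nw ω r1 r2 (b (Nw ω r1 r2 x) y) + Nw ω r1 r2 (b x (Nw ω r1 r2 y)) := by
  intro x y
  have hbracket : b (Nw ω r1 r2 x) (Nw ω r1 r2 y) =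
      Nw ω r1 r2 (b (Nw ω r1 r2 x) y + b x (Nw ω r1 r2 y) - Nw ω r1 r2 (b x y)) := by
    rw [bracket_Nw_Nw_eq_sum_of_cybe b ω r1 r2 hcybe]
    refine Finset.sum_congr rfl fun j _ => congrArg (· • r2 j) ?_
    exact sum_cybe_coeff_eq_of_ccybe b ω r1 r2 hcomm hskew hsymp hccybe x y (r1 j)
  rw [hbracket, Nw_sub, Nw_add]
  abel

/-- Let `(A,[,],ω)` be a symplectic mock-Lie algebra and `r` antisymmetric such that
`(A,[,],r,Δ_r)` is quasitriangular (`r` solves the cmLYBe) and `(A,Δ_r,ω,[,]_ω)` is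
dual quasitriangular (`ω` solves the ccmLYBe in `(A,Δ_r)`). Then `N(x) = ω(x,r¹)r²`
is a Nijenhuis operator on `(A,[,])`. -/
theorem stmt9 {K A ι : Type*} [Field K] [CharZero K]
    [AddCommGroup A] [Module K A] [Fintype ι]
    (b : A →ₗ[K] A →ₗ[K] A) (ω : A →ₗ[K] A →ₗ[K] K) (r1 r2 : ι → A)
    (hcomm : ∀ x y : A, b x y = b y x)
    (hjac : ∀ x y z : A, b x (b y z) + b y (b z x) + b z (b x y) = 0)
    (hskew : ∀ x y : A, ω x y = - ω y x)
    (hsymp : ∀ x y z : A, ω (b x y) z + ω (b y z) x + ω (b z x) y = 0)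
    (hanti : (TensorProduct.comm K A A) (∑ i, r1 i ⊗ₜ[K] r2 i) =
      - ∑ i, r1 i ⊗ₜ[K] r2 i)
    (hcybe : ∑ i, ∑ j, (b (r1 i) (r1 j)) ⊗ₜ[K] (r2 i ⊗ₜ[K] r2 j) +
      ∑ i, ∑ j, r1 i ⊗ₜ[K] (r1 j ⊗ₜ[K] (b (r2 i) (r2 j))) -
      ∑ i, ∑ j, r1 i ⊗ₜ[K] ((b (r1 j) (r2 i)) ⊗ₜ[K] r2 j) = 0)
    (hccybe : ∀ x y z : A,
      pair2 (ω.flip y) (ω.flip z) (DeltaR b r1 r2 x) +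
        pair2 (ω x) (ω y) (DeltaR b r1 r2 z) -
        pair2 (ω x) (ω.flip z) (DeltaR b r1 r2 y) = 0) :
    ∀ x y : A,
      b (Nw ω r1 r2 x) (Nw ω r1 r2 y) + Nw ω r1 r2 (Nw ω r1 r2 (b x y)) =
        Nw ω r1 r2 (b (Nw ω r1 r2 x) y) + Nw ω r1 r2 (b x (Nw ω r1 r2 y)) :=
  stmt9_general b ω r1 r2 hcomm hskew hsymp hcybe hccybe
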